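/- Let K ∈ L^∞(ℝ³) be almost everywhere continuous with K(z) → K(0) = sup_{ℝ³} K > 0 as |z| → 0. Then the infimum of the functional I over the Nehari manifold N equals 1/(4K(0)). -/

import Mathlib

open MeasureTheory Filter Metric
open scoped ENNReal RealInnerProductSpace Topology

noncomputable section

abbrev E3 : Type := EuclideanSpace ℝ (Fin 3)

def e3 (i : Fin 3) : E3 := EuclideanSpace.single i 1

/-- The curl of a (differentiable) vector field on `ℝ³`, defined componentwise via
`(∇×φ)ᵢ = ∂_{i+1} φ_{i+2} − ∂_{i+2} φ_{i+1}` (cyclically). -/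
def curlFun (φ : E3 → E3) (x : E3) : E3 :=
  ∑ i : Fin 3, EuclideanSpace.single i
    (fderiv ℝ φ x (e3 (i + 1)) (i + 2) - fderiv ℝ φ x (e3 (i + 2)) (i + 1))

/-- `E ∈ H¹(curl; ℝ³)` with distributional curl `C`, i.e. `E, C ∈ L²(ℝ³;ℝ³)` and
`∫ E · (∇×φ) = ∫ C · φ` for all test fields `φ`. -/
def MemHCurl (E C : E3 → E3) : Prop :=
  MemLp E 2 volume ∧ MemLp C 2 volume ∧
  ∀ φ : E3 → E3, ContDiff ℝ (⊤ : ℕ∞) φ → HasCompactSupport φ →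
    ∫ x, ⟪E x, curlFun φ x⟫ = ∫ x, ⟪C x, φ x⟫

/-- `I_L(E) = ∫ (|∇×E|² + |E|²)`, with `C` the distributional curl of `E`. -/
def IL (E C : E3 → E3) : ℝ := ∫ x, (‖C x‖ ^ 2 + ‖E x‖ ^ 2)

/-- `I_NL(E) = ∫∫ K(x−y)|E(x)|²|E(y)|² dx dy = ∫ (K∗|E|²)|E|²`. -/
def INL (K : E3 → ℝ) (E : E3 → E3) : ℝ :=
  ∫ x, ∫ y, K (x - y) * ‖E x‖ ^ 2 * ‖E y‖ ^ 2

/-- The energy functional `I(E) = ½ I_L(E) − ¼ I_NL(E)`. -/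
def Ifun (K : E3 → ℝ) (E C : E3 → E3) : ℝ := (1/2) * IL E C - (1/4) * INL K E

/-- Membership in the Nehari manifold
`N = {E ∈ H¹(curl;ℝ³) : I′(E)[E] = 0, E ≠ 0}`; note `I′(E)[E] = I_L(E) − I_NL(E)`. -/
def InNehari (K : E3 → ℝ) (E C : E3 → E3) : Prop :=
  MemHCurl E C ∧ IL E C = INL K E ∧ ¬ E =ᵐ[volume] (0 : E3 → E3)

/-- The set of energy levels attained on the Nehari manifold. -/
def nehariLevels (K : E3 → ℝ) : Set ℝ :=
  {r : ℝ | ∃ E C : E3 → E3, InNehari K E C ∧ r = Ifun K E C}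

namespace NehariAux

lemma integrable_normSq {E : E3 → E3} (hE : MemLp E 2 volume) :
    Integrable (fun x => ‖E x‖ ^ 2) volume := by
  simpa using hE.integrable_norm_rpow (by norm_num) (by norm_num)

lemma ae_bound {K : E3 → ℝ} (hK : MemLp K ⊤ volume) :
    ∀ᵐ z ∂(volume : Measure E3), |K z| ≤ (eLpNorm K ⊤ volume).toReal := by
  have h1 : eLpNormEssSup K (volume : Measure E3) ≠ ⊤ := by
    rw [← eLpNorm_exponent_top]; exact hK.eLpNorm_lt_top.ne
  filter_upwards [ae_le_eLpNormEssSup (f := K) (μ := (volume : Measure E3))] with z hz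
  have : ((‖K z‖₊ : ℝ≥0∞)).toReal ≤ (eLpNormEssSup K (volume : Measure E3)).toReal :=
    ENNReal.toReal_mono h1 hz
  simpa [eLpNorm_exponent_top, Real.norm_eq_abs] using this

lemma inl_aux {K : E3 → ℝ} (hK : MemLp K ⊤ volume) {E : E3 → E3} (hE : MemLp E 2 volume) :
    Integrable (fun p : E3 × E3 => K (p.1 - p.2) * ‖E p.1‖ ^ 2 * ‖E p.2‖ ^ 2)
      ((volume : Measure E3).prod volume) ∧
    INL K E = ∫ p : E3 × E3, K (p.1 - p.2) * ‖E p.1‖ ^ 2 * ‖E p.2‖ ^ 2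
      ∂((volume : Measure E3).prod volume) := by
  have hg : Integrable (fun x => ‖E x‖ ^ 2) volume := integrable_normSq hE
  have hgg : Integrable (fun p : E3 × E3 => ‖E p.1‖ ^ 2 * ‖E p.2‖ ^ 2)
      ((volume : Measure E3).prod volume) := hg.mul_prod hg
  have hqmp := MeasureTheory.quasiMeasurePreserving_sub (volume : Measure E3) volume
  have hKm : AEStronglyMeasurable (fun p : E3 × E3 => K (p.1 - p.2))
      ((volume : Measure E3).prod volume) :=
    hK.aestronglyMeasurable.comp_quasiMeasurePreserving hqmp
  have hmeas : AEStronglyMeasurable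
      (fun p : E3 × E3 => K (p.1 - p.2) * ‖E p.1‖ ^ 2 * ‖E p.2‖ ^ 2)
      ((volume : Measure E3).prod volume) := by
    have := hKm.mul hgg.aestronglyMeasurable
    simpa [mul_assoc, Pi.mul_def] using this
  set M := (eLpNorm K ⊤ (volume : Measure E3)).toReal with hM
  have hbd : ∀ᵐ p ∂((volume : Measure E3).prod volume),
      ‖K (p.1 - p.2) * ‖E p.1‖ ^ 2 * ‖E p.2‖ ^ 2‖ ≤ M * (‖E p.1‖ ^ 2 * ‖E p.2‖ ^ 2) := by
    filter_upwards [hqmp.ae (ae_bound hK)] with p hp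
    have h1 : ‖K (p.1 - p.2) * ‖E p.1‖ ^ 2 * ‖E p.2‖ ^ 2‖
        = |K (p.1 - p.2)| * (‖E p.1‖ ^ 2 * ‖E p.2‖ ^ 2) := by
      rw [Real.norm_eq_abs, abs_mul, abs_mul,
        abs_of_nonneg (by positivity : (0:ℝ) ≤ ‖E p.1‖ ^ 2),
        abs_of_nonneg (by positivity : (0:ℝ) ≤ ‖E p.2‖ ^ 2), mul_assoc]
    rw [h1]
    exact mul_le_mul_of_nonneg_right hp (by positivity)
  have hint : Integrable (fun p : E3 × E3 => K (p.1 - p.2) * ‖E p.1‖ ^ 2 * ‖E p.2‖ ^ 2)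
      ((volume : Measure E3).prod volume) := (hgg.const_mul M).mono' hmeas hbd
  exact ⟨hint, integral_integral hint⟩

lemma inl_le {K : E3 → ℝ} (hK : MemLp K ⊤ volume) {E : E3 → E3} (hE : MemLp E 2 volume)
    {c : ℝ} (hpt : ∀ x y : E3, K (x - y) * ‖E x‖ ^ 2 * ‖E y‖ ^ 2 ≤ c * (‖E x‖ ^ 2 * ‖E y‖ ^ 2)) :
    INL K E ≤ c * (∫ x, ‖E x‖ ^ 2) ^ 2 := by
  obtain ⟨hint, hrepr⟩ := inl_aux hK hE
  have hg := integrable_normSq hE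
  have h2 : ∫ p : E3 × E3, c * (‖E p.1‖ ^ 2 * ‖E p.2‖ ^ 2) ∂((volume : Measure E3).prod volume)
      = c * (∫ x, ‖E x‖ ^ 2) ^ 2 := by
    rw [integral_const_mul,
      integral_prod_mul (fun x : E3 => ‖E x‖ ^ 2) (fun y : E3 => ‖E y‖ ^ 2)]; ring
  rw [hrepr, ← h2]
  exact integral_mono hint ((hg.mul_prod hg).const_mul c) fun p => hpt p.1 p.2

lemma inl_ge {K : E3 → ℝ} (hK : MemLp K ⊤ volume) {E : E3 → E3} (hE : MemLp E 2 volume)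
    {c : ℝ} (hpt : ∀ x y : E3, c * (‖E x‖ ^ 2 * ‖E y‖ ^ 2) ≤ K (x - y) * ‖E x‖ ^ 2 * ‖E y‖ ^ 2) :
    c * (∫ x, ‖E x‖ ^ 2) ^ 2 ≤ INL K E := by
  obtain ⟨hint, hrepr⟩ := inl_aux hK hE
  have hg := integrable_normSq hE
  have h2 : ∫ p : E3 × E3, c * (‖E p.1‖ ^ 2 * ‖E p.2‖ ^ 2) ∂((volume : Measure E3).prod volume)
      = c * (∫ x, ‖E x‖ ^ 2) ^ 2 := by
    rw [integral_const_mul,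
      integral_prod_mul (fun x : E3 => ‖E x‖ ^ 2) (fun y : E3 => ‖E y‖ ^ 2)]; ring
  rw [hrepr, ← h2]
  exact integral_mono ((hg.mul_prod hg).const_mul c) hint fun p => hpt p.1 p.2

lemma sq_integral_pos {E : E3 → E3} (hE : MemLp E 2 volume)
    (hne : ¬ E =ᵐ[volume] (0 : E3 → E3)) : 0 < ∫ x, ‖E x‖ ^ 2 := by
  have hg := integrable_normSq hE
  rcases (integral_nonneg (fun x => by positivity : 0 ≤ fun x => ‖E x‖ ^ 2)).lt_or_eq with h | h
  · exact h
  exfalso; apply hne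
  have h0 := (integral_eq_zero_iff_of_nonneg (fun x => by positivity : 0 ≤ fun x => ‖E x‖ ^ 2) hg).1 h.symm
  filter_upwards [h0] with x hx
  have : ‖E x‖ ^ 2 = 0 := hx
  have : ‖E x‖ = 0 := by nlinarith [norm_nonneg (E x)]
  simpa using this


lemma single_eq_smul (i : Fin 3) (t : ℝ) :
    EuclideanSpace.single i t = t • e3 i := by
  ext j; simp [e3, EuclideanSpace.single_apply]

lemma integral_fderiv_curl (u : E3 → ℝ) (hu : ContDiff ℝ 2 u) (hcu : HasCompactSupport u)
    (φ : E3 → E3) (hφ : ContDiff ℝ (⊤ : ℕ∞) φ) (hcφ : HasCompactSupport φ) :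
    ∫ x, fderiv ℝ u x (curlFun φ x) = 0 := by
  have hφd : Differentiable ℝ φ := hφ.differentiable (by simp)
  have hD1 : ContDiff ℝ 1 (fderiv ℝ φ) := hφ.fderiv_right (WithTop.coe_le_coe.2 le_top)
  have hDc : Continuous (fderiv ℝ φ) := hD1.continuous
  have hDd : Differentiable ℝ (fderiv ℝ φ) := hD1.differentiable one_ne_zero
  have hD2c : Continuous (fderiv ℝ (fderiv ℝ φ)) := hD1.continuous_fderiv one_ne_zero
  have hud : Differentiable ℝ u := hu.differentiable two_ne_zero
  have huc : Continuous u := hu.continuous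
  have hu'c : Continuous (fderiv ℝ u) := hu.continuous_fderiv two_ne_zero
  -- second derivative components
  set S : Fin 3 → Fin 3 → Fin 3 → E3 → ℝ :=
    fun a b c x => fderiv ℝ (fderiv ℝ φ) x (e3 a) (e3 b) c with hSdef
  set F : Fin 3 → Fin 3 → E3 → ℝ := fun b c x => fderiv ℝ φ x (e3 b) c with hFdef
  -- bundled evaluation functionals
  have hL : ∀ b c : Fin 3, ∃ L : (E3 →L[ℝ] E3) →L[ℝ] ℝ, ∀ T : E3 →L[ℝ] E3, L T = T (e3 b) c :=
    fun b c => ⟨(EuclideanSpace.proj c).comp (ContinuousLinearMap.apply ℝ E3 (e3 b)),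
      fun T => rfl⟩
  have hFc : ∀ b c, Continuous (F b c) := by
    intro b c
    obtain ⟨L, hLT⟩ := hL b c
    have : F b c = fun x => L (fderiv ℝ φ x) := funext fun x => (hLT _).symm
    rw [this]; exact L.continuous.comp hDc
  have hFd : ∀ b c, Differentiable ℝ (F b c) := by
    intro b c
    obtain ⟨L, hLT⟩ := hL b c
    have : F b c = fun x => L (fderiv ℝ φ x) := funext fun x => (hLT _).symm
    rw [this]; exact L.differentiable.comp hDd
  have hFderiv : ∀ a b c (x : E3), fderiv ℝ (F b c) x (e3 a) = S a b c x := by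
    intro a b c x
    obtain ⟨L, hLT⟩ := hL b c
    have hFeq : F b c = fun y => L (fderiv ℝ φ y) := funext fun y => (hLT _).symm
    have h1 : HasFDerivAt (fun y => L (fderiv ℝ φ y))
        (L.comp (fderiv ℝ (fderiv ℝ φ) x)) x :=
      L.hasFDerivAt.comp x (hDd x).hasFDerivAt
    rw [hFeq, h1.fderiv]
    simpa [hSdef] using hLT (fderiv ℝ (fderiv ℝ φ) x (e3 a))
  have hScont : ∀ a b c, Continuous (S a b c) := by
    intro a b c
    obtain ⟨L, hLT⟩ := hL b c
    have : S a b c = fun x => L ((ContinuousLinearMap.apply ℝ (E3 →L[ℝ] E3) (e3 a))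
        (fderiv ℝ (fderiv ℝ φ) x)) := funext fun x => (hLT _).symm
    rw [this]
    exact L.continuous.comp ((ContinuousLinearMap.apply ℝ (E3 →L[ℝ] E3) (e3 a)).continuous.comp hD2c)
  have hSsymm : ∀ a b c (x : E3), S a b c x = S b a c x := by
    intro a b c x
    have h2 := second_derivative_symmetric (f := φ) (f' := fderiv ℝ φ)
      (f'' := fderiv ℝ (fderiv ℝ φ) x) (fun y => (hφd y).hasFDerivAt)
      ((hDd x).hasFDerivAt) (e3 a) (e3 b)
    simp only [hSdef]
    rw [h2]
  -- compact support helpers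
  have hcu' : ∀ a : Fin 3, HasCompactSupport (fun x => fderiv ℝ u x (e3 a)) :=
    fun a => (hcu.fderiv ℝ).comp_left (g := fun T : E3 →L[ℝ] ℝ => T (e3 a)) rfl
  have hu'contA : ∀ a : Fin 3, Continuous (fun x => fderiv ℝ u x (e3 a)) :=
    fun a => (ContinuousLinearMap.apply ℝ ℝ (e3 a)).continuous.comp hu'c
  -- integration by parts
  have hT : ∀ a b c : Fin 3,
      ∫ x, F b c x * fderiv ℝ u x (e3 a) = - ∫ x, S a b c x * u x := by
    intro a b c
    have h1 : Integrable (fun x => fderiv ℝ (F b c) x (e3 a) * u x) volume := by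
      have heq : (fun x => fderiv ℝ (F b c) x (e3 a) * u x)
          = fun x => S a b c x * u x := funext fun x => by simp only [hFderiv]
      rw [heq]
      exact Continuous.integrable_of_hasCompactSupport ((hScont a b c).mul huc) hcu.mul_left
    have h2 : Integrable (fun x => F b c x * fderiv ℝ u x (e3 a)) volume :=
      Continuous.integrable_of_hasCompactSupport ((hFc b c).mul (hu'contA a)) (hcu' a).mul_left
    have h3 : Integrable (fun x => F b c x * u x) volume :=
      Continuous.integrable_of_hasCompactSupport ((hFc b c).mul huc) hcu.mul_left
    have := integral_mul_fderiv_eq_neg_fderiv_mul_of_integrable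
      (f := F b c) (g := u) (v := e3 a) (μ := volume) h1 h2 h3 (fun x _ => hFd b c x) (fun x _ => hud x)
    rw [this]
    congr 1
    exact integral_congr_ae (Filter.Eventually.of_forall fun x => by simp only [hFderiv])
  -- expand the curl pointwise
  have hpt : ∀ x : E3, fderiv ℝ u x (curlFun φ x)
      = ∑ i : Fin 3, (F (i+1) (i+2) x - F (i+2) (i+1) x) * fderiv ℝ u x (e3 i) := by
    intro x
    rw [curlFun, map_sum]
    refine Finset.sum_congr rfl fun i _ => ?_
    rw [single_eq_smul, _root_.map_smul, smul_eq_mul]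
  have hint_i : ∀ i : Fin 3, Integrable
      (fun x => (F (i+1) (i+2) x - F (i+2) (i+1) x) * fderiv ℝ u x (e3 i)) volume := by
    intro i
    exact Continuous.integrable_of_hasCompactSupport
      (((hFc _ _).sub (hFc _ _)).mul (hu'contA i)) (hcu' i).mul_left
  have hsplit : ∀ i : Fin 3,
      ∫ x, (F (i+1) (i+2) x - F (i+2) (i+1) x) * fderiv ℝ u x (e3 i)
        = (- ∫ x, S i (i+1) (i+2) x * u x) - (- ∫ x, S i (i+2) (i+1) x * u x) := by
    intro i
    have h2 : Integrable (fun x => F (i+1) (i+2) x * fderiv ℝ u x (e3 i)) volume :=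
      Continuous.integrable_of_hasCompactSupport ((hFc _ _).mul (hu'contA i)) (hcu' i).mul_left
    have h3 : Integrable (fun x => F (i+2) (i+1) x * fderiv ℝ u x (e3 i)) volume :=
      Continuous.integrable_of_hasCompactSupport ((hFc _ _).mul (hu'contA i)) (hcu' i).mul_left
    have heq : (fun x => (F (i+1) (i+2) x - F (i+2) (i+1) x) * fderiv ℝ u x (e3 i))
        = fun x => F (i+1) (i+2) x * fderiv ℝ u x (e3 i)
            - F (i+2) (i+1) x * fderiv ℝ u x (e3 i) := funext fun x => by ring
    rw [heq, integral_sub h2 h3, hT, hT]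
  have hJ : ∀ a b c : Fin 3, (∫ x, S a b c x * u x) = ∫ x, S b a c x * u x :=
    fun a b c => integral_congr_ae (Filter.Eventually.of_forall fun x => by simp only [hSsymm])
  calc ∫ x, fderiv ℝ u x (curlFun φ x)
      = ∫ x, ∑ i : Fin 3, (F (i+1) (i+2) x - F (i+2) (i+1) x) * fderiv ℝ u x (e3 i) :=
        integral_congr_ae (Filter.Eventually.of_forall fun x => hpt x)
    _ = ∑ i : Fin 3, ∫ x, (F (i+1) (i+2) x - F (i+2) (i+1) x) * fderiv ℝ u x (e3 i) :=
        integral_finset_sum _ fun i _ => hint_i i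
    _ = 0 := by
        rw [Fin.sum_univ_three, hsplit, hsplit, hsplit]
        have e01 : ((0:Fin 3)+1) = 1 := by decide
        have e02 : ((0:Fin 3)+2) = 2 := by decide
        have e11 : ((1:Fin 3)+1) = 2 := by decide
        have e12 : ((1:Fin 3)+2) = 0 := by decide
        have e21 : ((2:Fin 3)+1) = 0 := by decide
        have e22 : ((2:Fin 3)+2) = 1 := by decide
        rw [e01, e02, e11, e12, e21, e22, hJ 0 2 1, hJ 1 0 2, hJ 2 1 0]
        ring


lemma exists_level (K : E3 → ℝ) (hK : MemLp K ⊤ volume) (hK0 : ContinuousAt K 0)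
    (hpos : 0 < K 0) {ε : ℝ} (hε : 0 < ε) (hεK : ε < K 0) :
    ∃ r ∈ nehariLevels K, r ≤ 1 / (4 * (K 0 - ε)) := by
  obtain ⟨ρ, hρ, hball⟩ := Metric.continuousAt_iff.1 hK0 ε hε
  set f : ContDiffBump (0 : E3) := ⟨ρ/8, ρ/4, by positivity, by linarith⟩ with hf
  set u : E3 → ℝ := ⇑f with hu
  have hu2 : ContDiff ℝ 2 u := by exact_mod_cast f.contDiff (n := 2)
  have hcu : HasCompactSupport u := f.hasCompactSupport
  set E : E3 → E3 := fun x => (InnerProductSpace.toDual ℝ E3).symm (fderiv ℝ u x) with hEdef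
  have hinner : ∀ (x v : E3), ⟪E x, v⟫ = fderiv ℝ u x v := fun x v =>
    InnerProductSpace.toDual_symm_apply
  have hEcont : Continuous E :=
    (InnerProductSpace.toDual ℝ E3).symm.continuous.comp (hu2.continuous_fderiv two_ne_zero)
  have hEcs : HasCompactSupport E :=
    (hcu.fderiv ℝ).comp_left (g := fun T => (InnerProductSpace.toDual ℝ E3).symm T)
      (by simp)
  have hEmem : MemLp E 2 volume := hEcont.memLp_of_hasCompactSupport hEcs
  have hEzero_iff : ∀ x, E x = 0 ↔ fderiv ℝ u x = 0 := by
    intro x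
    constructor
    · intro h
      have h2 : (InnerProductSpace.toDual ℝ E3).symm (fderiv ℝ u x)
          = (InnerProductSpace.toDual ℝ E3).symm 0 := by
        simp only [map_zero]
        exact h
      exact (InnerProductSpace.toDual ℝ E3).symm.injective h2
    · intro h; rw [hEdef]; simp [h]
  have hEsupp : ∀ x : E3, E x ≠ 0 → ‖x‖ ≤ ρ/4 := by
    intro x hx
    have h1 : fderiv ℝ u x ≠ 0 := fun h => hx ((hEzero_iff x).2 h)
    have h2 : x ∈ tsupport u := support_fderiv_subset ℝ h1
    have h3 : x ∈ Metric.closedBall (0:E3) (ρ/4) := by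
      rw [hu] at h2
      rw [← f.tsupport_eq]
      exact h2
    simpa [Metric.mem_closedBall, dist_zero_right] using h3
  have hnonzero : ¬ E =ᵐ[volume] (0 : E3 → E3) := by
    intro h
    have hEeq : E = fun _ => (0:E3) :=
      (Continuous.ae_eq_iff_eq volume hEcont continuous_const).1 h
    have hfd : ∀ x, fderiv ℝ u x = 0 := fun x =>
      (hEzero_iff x).1 (by rw [hEeq])
    have hconst := is_const_of_fderiv_eq_zero (hu2.differentiable two_ne_zero) hfd
    have h1 : u 0 = 1 := f.one_of_mem_closedBall (Metric.mem_closedBall_self (by positivity))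
    set z : E3 := (ρ/2) • e3 0 with hz
    have hznorm : ‖z‖ = ρ/2 := by
      rw [hz, norm_smul, e3, EuclideanSpace.norm_single]
      simp [abs_of_pos hρ]
    have h2 : u z = 0 := by
      apply image_eq_zero_of_notMem_tsupport
      rw [hu, f.tsupport_eq]
      simp only [Metric.mem_closedBall, dist_zero_right, not_le, hznorm]
      have hrOut : f.rOut = ρ/4 := rfl
      linarith
    have := hconst z 0
    rw [h1, h2] at this
    norm_num at this
  set A := ∫ x, ‖E x‖ ^ 2 with hA
  have hApos : 0 < A := sq_integral_pos hEmem hnonzero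
  have hcpos : 0 < K 0 - ε := by linarith
  have hptl : ∀ x y : E3,
      (K 0 - ε) * (‖E x‖ ^ 2 * ‖E y‖ ^ 2) ≤ K (x - y) * ‖E x‖ ^ 2 * ‖E y‖ ^ 2 := by
    intro x y
    rcases eq_or_ne (‖E x‖ ^ 2 * ‖E y‖ ^ 2) 0 with h | h
    · rw [mul_assoc, h, mul_zero, mul_zero]
    · obtain ⟨h1, h2⟩ := mul_ne_zero_iff.1 h
      have hx : E x ≠ 0 := fun h0 => h1 (by rw [h0]; simp)
      have hy : E y ≠ 0 := fun h0 => h2 (by rw [h0]; simp)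
      have hxn := hEsupp x hx
      have hyn := hEsupp y hy
      have hd : dist (x - y) 0 < ρ := by
        rw [dist_zero_right]
        calc ‖x - y‖ ≤ ‖x‖ + ‖y‖ := norm_sub_le x y
          _ < ρ := by linarith
      have hKxy : K 0 - ε ≤ K (x - y) := by
        have := hball hd
        rw [Real.dist_eq] at this
        have := abs_sub_lt_iff.1 this
        linarith [this.2]
      calc (K 0 - ε) * (‖E x‖ ^ 2 * ‖E y‖ ^ 2)
          ≤ K (x - y) * (‖E x‖ ^ 2 * ‖E y‖ ^ 2) :=
            mul_le_mul_of_nonneg_right hKxy (by positivity)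
        _ = K (x - y) * ‖E x‖ ^ 2 * ‖E y‖ ^ 2 := by ring
  have hBlow : (K 0 - ε) * A ^ 2 ≤ INL K E := inl_ge hK hEmem hptl
  have hBpos : 0 < INL K E :=
    lt_of_lt_of_le (by positivity) hBlow
  set B := INL K E with hB
  set t := Real.sqrt (A / B) with ht
  have ht2 : t ^ 2 = A / B := Real.sq_sqrt (le_of_lt (div_pos hApos hBpos))
  have htpos : 0 < t := Real.sqrt_pos.2 (div_pos hApos hBpos)
  set E' : E3 → E3 := fun x => t • E x with hE'
  have hgE' : ∀ x, ‖E' x‖ ^ 2 = t ^ 2 * ‖E x‖ ^ 2 := by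
    intro x
    rw [hE']
    rw [norm_smul]
    simp [mul_pow, Real.norm_eq_abs, sq_abs]
  have hILE' : IL E' (fun _ => (0:E3)) = t ^ 2 * A := by
    rw [IL]
    simp only [norm_zero, ne_eq, OfNat.ofNat_ne_zero, not_false_eq_true, zero_pow, zero_add]
    calc ∫ x, ‖E' x‖ ^ 2 = ∫ x, t ^ 2 * ‖E x‖ ^ 2 :=
          integral_congr_ae (Filter.Eventually.of_forall fun x => hgE' x)
      _ = t ^ 2 * A := integral_const_mul _ _
  have hINLE' : INL K E' = t ^ 4 * B := by
    rw [INL]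
    have hptw : ∀ x y : E3, K (x - y) * ‖E' x‖ ^ 2 * ‖E' y‖ ^ 2
        = t ^ 4 * (K (x - y) * ‖E x‖ ^ 2 * ‖E y‖ ^ 2) := by
      intro x y; rw [hgE', hgE']; ring
    calc ∫ x, ∫ y, K (x - y) * ‖E' x‖ ^ 2 * ‖E' y‖ ^ 2
        = ∫ x, ∫ y, t ^ 4 * (K (x - y) * ‖E x‖ ^ 2 * ‖E y‖ ^ 2) := by
          refine integral_congr_ae (Filter.Eventually.of_forall fun x => ?_)
          exact integral_congr_ae (Filter.Eventually.of_forall fun y => hptw x y)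
      _ = ∫ x, t ^ 4 * ∫ y, K (x - y) * ‖E x‖ ^ 2 * ‖E y‖ ^ 2 := by
          refine integral_congr_ae (Filter.Eventually.of_forall fun x => ?_)
          exact integral_const_mul _ _
      _ = t ^ 4 * ∫ x, ∫ y, K (x - y) * ‖E x‖ ^ 2 * ‖E y‖ ^ 2 := integral_const_mul _ _
      _ = t ^ 4 * B := by rw [hB, INL]
  have ht4 : t ^ 4 = (A / B) ^ 2 := by rw [← ht2]; ring
  have hNehari : InNehari K E' (fun _ => (0:E3)) := by
    refine ⟨⟨?_, ?_, ?_⟩, ?_, ?_⟩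
    · have := hEmem.const_smul t
      exact this
    · exact MemLp.zero'
    · intro φ hφ hφc
      have hcurl0 : ∫ x, fderiv ℝ u x (curlFun φ x) = 0 :=
        integral_fderiv_curl u hu2 hcu φ hφ hφc
      have hlhs : ∫ x, ⟪E' x, curlFun φ x⟫ = t * ∫ x, fderiv ℝ u x (curlFun φ x) := by
        rw [← integral_const_mul]
        refine integral_congr_ae (Filter.Eventually.of_forall fun x => ?_)
        show ⟪t • E x, curlFun φ x⟫ = t * fderiv ℝ u x (curlFun φ x)
        rw [real_inner_smul_left, hinner]
      rw [hlhs, hcurl0, mul_zero]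
      simp
    · rw [hILE', hINLE', ht2, ht4]
      field_simp
    · intro h
      apply hnonzero
      filter_upwards [h] with x hx
      have hx' : t • E x = 0 := hx
      have := (smul_eq_zero.1 hx').resolve_left htpos.ne'
      exact this
  refine ⟨Ifun K E' (fun _ => (0:E3)), ⟨E', fun _ => (0:E3), hNehari, rfl⟩, ?_⟩
  rw [Ifun, hILE', hINLE', ht2, ht4]
  have hLHS : 1/2 * (A / B * A) - 1/4 * ((A / B) ^ 2 * B) = A ^ 2 / (4 * B) := by
    field_simp; ring
  rw [hLHS, div_le_div_iff₀ (by positivity) (by positivity)]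
  nlinarith [hBlow]


lemma level_lower {K : E3 → ℝ} (hK : MemLp K ⊤ volume)
    (hsup : ∀ z : E3, K z ≤ K 0) (hpos : 0 < K 0) {E C : E3 → E3}
    (h : InNehari K E C) : 1 / (4 * K 0) ≤ Ifun K E C := by
  obtain ⟨⟨hE, hC, _⟩, hEq, hne⟩ := h
  have hg := integrable_normSq hE
  have hgC := integrable_normSq hC
  set A := ∫ x, ‖E x‖ ^ 2 with hA
  have hApos : 0 < A := sq_integral_pos hE hne
  have hIL : IL E C = (∫ x, ‖C x‖ ^ 2) + A := by
    rw [IL]; exact integral_add hgC hg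
  have hCnn : 0 ≤ ∫ x, ‖C x‖ ^ 2 := integral_nonneg fun x => by positivity
  have hILge : A ≤ IL E C := by rw [hIL]; linarith
  have hle : INL K E ≤ K 0 * A ^ 2 := by
    apply inl_le hK hE
    intro x y
    have h1 : K (x - y) ≤ K 0 := hsup _
    have h2 : (0:ℝ) ≤ ‖E x‖ ^ 2 * ‖E y‖ ^ 2 := by positivity
    calc K (x - y) * ‖E x‖ ^ 2 * ‖E y‖ ^ 2
        = K (x - y) * (‖E x‖ ^ 2 * ‖E y‖ ^ 2) := by ring
      _ ≤ K 0 * (‖E x‖ ^ 2 * ‖E y‖ ^ 2) := mul_le_mul_of_nonneg_right h1 h2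
  have hILpos : 0 < IL E C := lt_of_lt_of_le hApos hILge
  have key : IL E C ≤ K 0 * IL E C ^ 2 := by
    calc IL E C = INL K E := hEq
      _ ≤ K 0 * A ^ 2 := hle
      _ ≤ K 0 * IL E C ^ 2 := by
          apply mul_le_mul_of_nonneg_left _ hpos.le
          nlinarith
  have h1 : 1 ≤ K 0 * IL E C := by
    nlinarith
  rw [Ifun, ← hEq]
  have : 1 / (4 * K 0) ≤ IL E C / 4 := by
    rw [div_le_div_iff₀ (by positivity) (by norm_num)]
    nlinarith
  linarith

end NehariAux

/-- If `K ∈ L^∞(ℝ³)` is a.e. continuous, `K(z) → K(0)` as `|z| → 0`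
(i.e. `K` is continuous at `0`), and `K(0) = sup_{ℝ³} K > 0`, then
`inf_{N} I = 1/(4K(0))`. -/
theorem inf_nehari_eq (K : E3 → ℝ) (hK : MemLp K ⊤ volume)
    (hKcont : ∀ᵐ z ∂(volume : Measure E3), ContinuousAt K z)
    (hK0 : ContinuousAt K 0)
    (hsup : ∀ z : E3, K z ≤ K 0) (hpos : 0 < K 0) :
    sInf (nehariLevels K) = 1 / (4 * K 0) := by
  have hlb : ∀ r ∈ nehariLevels K, 1 / (4 * K 0) ≤ r := by
    rintro r ⟨E, C, hN, rfl⟩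
    exact NehariAux.level_lower hK hsup hpos hN
  have hbdd : BddBelow (nehariLevels K) := ⟨1 / (4 * K 0), hlb⟩
  have hne : (nehariLevels K).Nonempty := by
    obtain ⟨r, hr, -⟩ := NehariAux.exists_level K hK hK0 hpos
      (ε := K 0 / 2) (by positivity) (by linarith)
    exact ⟨r, hr⟩
  apply le_antisymm
  · apply le_of_forall_pos_le_add
    intro δ hδ
    set ε := min (K 0 / 2) (2 * δ * K 0 ^ 2) with hε
    have hε0 : 0 < ε := lt_min (by positivity) (by positivity)
    have hεK : ε < K 0 := lt_of_le_of_lt (min_le_left _ _) (by linarith)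
    obtain ⟨r, hr, hrle⟩ := NehariAux.exists_level K hK hK0 hpos hε0 hεK
    have h1 : sInf (nehariLevels K) ≤ r := csInf_le hbdd hr
    have h2 : 1 / (4 * (K 0 - ε)) ≤ 1 / (4 * K 0) + δ := by
      have hc1 : ε ≤ K 0 / 2 := min_le_left _ _
      have hc2 : ε ≤ 2 * δ * K 0 ^ 2 := min_le_right _ _
      have hKε : 0 < K 0 - ε := by linarith
      rw [div_le_iff₀ (by positivity)]
      have expand : (1 / (4 * K 0) + δ) * (4 * (K 0 - ε))
          = (K 0 - ε) / K 0 + 4 * δ * (K 0 - ε) := by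
        field_simp
      rw [expand]
      have h3 : (K 0 - ε) / K 0 = 1 - ε / K 0 := by
        field_simp
      rw [h3]
      have h4 : ε / K 0 ≤ 4 * δ * (K 0 - ε) := by
        rw [div_le_iff₀ hpos]
        nlinarith
      linarith
    linarith
  · exact le_csInf hne hlb
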